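/- The exponential generating function of H(n) := Σ_{k=1}^{n} (k-1)!·S(n,k) (with H(0)=0) satisfies Σ_{n≥0} H(n)·xⁿ/n! = -log(2 - eˣ) for real x with |x| < log 2. -/

import Mathlib

open Finset

/-- Stirling numbers of the second kind. -/
def S : ℕ → ℕ → ℕ
  | 0, 0 => 1
  | 0, _ + 1 => 0
  | _ + 1, 0 => 0
  | n + 1, k + 1 => (k + 1) * S n (k + 1) + S n k

/-- Ordered Bell (Fubini) numbers. -/
def B (n : ℕ) : ℕ := ∑ k ∈ range (n + 1), k.factorial * S n k

/-- H n = ∑_{k=1}^n (k-1)!·S(n,k); note H 0 = 0 since the sum is empty. -/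
def H (n : ℕ) : ℕ := ∑ k ∈ Icc 1 n, (k - 1).factorial * S n k

/-!
Writing `H n = ∑ₖ k! S(n, k+1)`, the theorem follows from the column generating functions
`∑ₙ k! S(n, k) xⁿ / n! = (eˣ - 1)ᵏ` by summing `(eˣ - 1)ᵏ⁺¹ / (k + 1)` over `k`, which is the
series of `-log (1 - (eˣ - 1))` as long as `|eˣ - 1| < 1`. The column identity comes from the
classical formula `k! S(n, k) = Δᵏ (r ↦ rⁿ) (0)`: since `Δᵏ` is a finite linear combination of
shifts, it commutes with the exponential series, and `Δᵏ (r ↦ e^{r x}) (0) = (eˣ - 1)ᵏ`. Swapping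
the two summations is legitimate because the double series with `|x|` in place of `x` has
nonnegative terms and converges by the same computation.
-/

open Nat fwdDiff

theorem S_eq_stirlingSecond : S = stirlingSecond := by
  funext n k
  induction n generalizing k with
  | zero => cases k <;> rfl
  | succ n ih => cases k <;> simp [S, stirlingSecond_succ_succ, ih]

theorem H_eq_sum_range (n : ℕ) : H n = ∑ k ∈ range n, k ! * stirlingSecond n (k + 1) := by
  rw [H, S_eq_stirlingSecond, ← Ico_add_one_right_eq_Icc, range_eq_Ico]
  exact (sum_Ico_add' (fun k ↦ (k - 1)! * stirlingSecond n k) 0 n 1).symm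

section ForwardDifference

variable {R : Type*} [CommRing R]

theorem fwdDiff_iter_succ_id_mul (f : R → R) (k : ℕ) :
    Δ_[1] ^[k + 1] (fun r ↦ r * f r) =
      fun y ↦ y * Δ_[1] ^[k + 1] f y + (k + 1) * Δ_[1] ^[k] f (y + 1) := by
  induction k with
  | zero =>
    ext y
    simp only [zero_add, Function.iterate_one, fwdDiff, cast_zero, Function.iterate_zero, id_eq,
      one_mul]
    ring
  | succ k ih =>
    rw [Function.iterate_succ_apply', ih]
    ext y
    simp only [fwdDiff, Function.iterate_succ_apply']
    push_cast
    ring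

theorem factorial_mul_stirlingSecond_eq_fwdDiff_iter (n k : ℕ) :
    ((k ! * stirlingSecond n k : ℕ) : R) = Δ_[1] ^[k] (fun r : R ↦ r ^ n) 0 := by
  induction n generalizing k with
  | zero =>
    cases k with
    | zero => simp
    | succ k => rw [fwdDiff_iter_pow_eq_zero_of_lt k.succ_pos]; simp
  | succ n ih =>
    cases k with
    | zero => simp
    | succ k =>
      have hshift : Δ_[1] ^[k] (fun r : R ↦ r ^ n) 1 =
          Δ_[1] ^[k] (fun r : R ↦ r ^ n) 0 + Δ_[1] ^[k + 1] (fun r : R ↦ r ^ n) 0 := by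
        rw [Function.iterate_succ_apply', fwdDiff, zero_add]; ring
      simp_rw [_root_.pow_succ', fwdDiff_iter_succ_id_mul, zero_mul, zero_add, hshift, ← ih,
        stirlingSecond_succ_succ, factorial_succ]
      push_cast
      ring

end ForwardDifference

theorem HasSum.fwdDiff_iter {ι M G : Type*} [AddCommMonoid M] [AddCommGroup G] [TopologicalSpace G]
    [IsTopologicalAddGroup G] {F : ι → M → G} {f : M → G} (hF : ∀ y, HasSum (fun i ↦ F i y) (f y))
    (h : M) (k : ℕ) (y : M) : HasSum (fun i ↦ Δ_[h] ^[k] (F i) y) (Δ_[h] ^[k] f y) := by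
  induction k generalizing y with
  | zero => exact hF y
  | succ k ih =>
    simp only [Function.iterate_succ_apply', fwdDiff]
    exact (ih (y + h)).sub (ih y)

theorem hasSum_factorial_mul_stirlingSecond_mul_pow_div (x : ℝ) (k : ℕ) :
    HasSum (fun n ↦ (k ! * stirlingSecond n k : ℝ) * x ^ n / n !) ((Real.exp x - 1) ^ k) := by
  let χ : AddChar ℝ ℝ :=
    ⟨fun r ↦ Real.exp (r * x), by simp, fun a b ↦ by simp [add_mul, Real.exp_add]⟩
  have hexp (r : ℝ) : HasSum (fun n ↦ ((x ^ n / n !) • fun r : ℝ ↦ r ^ n) r) (χ r) := by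
    refine (Real.exp_eq_exp_ℝ ▸ NormedSpace.expSeries_div_hasSum_exp (r * x)).congr_fun fun n ↦ ?_
    simp only [Pi.smul_apply, smul_eq_mul, mul_pow]
    ring
  have h := HasSum.fwdDiff_iter hexp 1 k 0
  simp only [fwdDiff_addChar_eq, fwdDiff_iter_const_smul, Pi.smul_apply,
    ← factorial_mul_stirlingSecond_eq_fwdDiff_iter] at h
  have hχ : (χ 1 - 1) ^ k * χ 0 = (Real.exp x - 1) ^ k := by simp [χ]
  rw [hχ] at h
  exact h.congr_fun fun n ↦ by push_cast [smul_eq_mul]; ring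

theorem abs_exp_sub_one_lt_one {x : ℝ} (hx : |x| < Real.log 2) : |Real.exp x - 1| < 1 := by
  have : Real.exp x < 2 := by
    rw [← Real.exp_log two_pos]; exact Real.exp_lt_exp.mpr (lt_of_le_of_lt (le_abs_self x) hx)
  rw [abs_lt]; constructor <;> linarith [Real.exp_pos x]

theorem hasSum_factorial_mul_stirlingSecond_succ_mul_pow_div (x : ℝ) (k : ℕ) :
    HasSum (fun n ↦ (k ! * stirlingSecond n (k + 1) : ℝ) * x ^ n / n !)
      ((Real.exp x - 1) ^ (k + 1) / (k + 1)) := by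
  refine ((hasSum_factorial_mul_stirlingSecond_mul_pow_div x (k + 1)).div_const (k + 1)).congr_fun
    fun n ↦ ?_
  push_cast [factorial_succ]
  field_simp

theorem hasSum_H_mul_pow_div (x : ℝ) (n : ℕ) :
    HasSum (fun k ↦ (k ! * stirlingSecond n (k + 1) : ℝ) * x ^ n / n !) (H n * x ^ n / n !) := by
  rw [H_eq_sum_range]
  push_cast
  rw [sum_mul, sum_div]
  refine hasSum_sum_of_ne_finset_zero fun k hk ↦ ?_
  rw [stirlingSecond_eq_zero_of_lt (by simpa using hk)]
  simp

theorem summable_factorial_mul_stirlingSecond_succ {x : ℝ} (hx : |x| < Real.log 2) :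
    Summable fun p : ℕ × ℕ ↦ (p.1 ! * stirlingSecond p.2 (p.1 + 1) : ℝ) * x ^ p.2 / p.2 ! := by
  refine Summable.of_norm ?_
  simp only [norm_div, norm_mul, norm_pow, Real.norm_eq_abs, Nat.abs_cast]
  have habs : |(|x|)| < Real.log 2 := by rwa [abs_abs]
  refine (summable_prod_of_nonneg fun p ↦ by positivity).mpr
    ⟨fun k ↦ (hasSum_factorial_mul_stirlingSecond_succ_mul_pow_div |x| k).summable, ?_⟩
  simp only [(hasSum_factorial_mul_stirlingSecond_succ_mul_pow_div |x| _).tsum_eq]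
  exact (Real.hasSum_pow_div_log_of_abs_lt_one (abs_exp_sub_one_lt_one habs)).summable

theorem stmt15 (x : ℝ) (hx : |x| < Real.log 2) :
    ∑' n : ℕ, (H n : ℝ) * x ^ n / n.factorial = -Real.log (2 - Real.exp x) := by
  calc ∑' n : ℕ, (H n : ℝ) * x ^ n / n !
      = ∑' (n : ℕ) (k : ℕ), (k ! * stirlingSecond n (k + 1) : ℝ) * x ^ n / n ! :=
        tsum_congr fun n ↦ (hasSum_H_mul_pow_div x n).tsum_eq.symm
    _ = ∑' (k : ℕ) (n : ℕ), (k ! * stirlingSecond n (k + 1) : ℝ) * x ^ n / n ! :=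
        (summable_factorial_mul_stirlingSecond_succ hx).tsum_comm
    _ = ∑' k : ℕ, (Real.exp x - 1) ^ (k + 1) / (k + 1) :=
        tsum_congr fun k ↦ (hasSum_factorial_mul_stirlingSecond_succ_mul_pow_div x k).tsum_eq
    _ = -Real.log (2 - Real.exp x) := by
        rw [(Real.hasSum_pow_div_log_of_abs_lt_one (abs_exp_sub_one_lt_one hx)).tsum_eq]
        ring_nf
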